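/- Let a, b be the two endpoints of a diametral path of T w.r.t. c. Then for every vertex u of T, max_{y ∈ V(T)} (d_T(u,y) + c(y)) = max{d_T(u,a) + c(a), d_T(u,b) + c(b)}; that is, the eccentricity of any vertex is attained at an endpoint of a diametral path. -/

import Mathlib

/-!
Trees satisfy the four-point condition
`d(u,y) + d(a,b) ≤ max (d(u,a) + d(y,b)) (d(u,b) + d(y,a))`, seen by projecting `u` and `y`
onto the path from `a` to `b` and comparing the order of the two projections along it.
Adding `c(y) + c(a) + c(b)` and bounding `c(y) + d(y,b) + c(b)` and `c(y) + d(y,a) + c(a)` by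
the diametral value `c(a) + d(a,b) + c(b)`, which then cancels, gives
`d(u,y) + c(y) ≤ max (d(u,a) + c(a)) (d(u,b) + c(b))`. A vertex of cost `−∞` contributes
nothing; otherwise `c(y)`, `c(a)` and `c(b)` are real and the computation takes place in `ℝ`.
-/

namespace SimpleGraph

variable {V : Type*} {G : SimpleGraph V}

theorem Walk.IsPath.append {u v w : V} {p : G.Walk u v} {q : G.Walk v w} (hp : p.IsPath)
    (hq : q.IsPath) (h : ∀ x ∈ p.support, x ∉ q.support.tail) : (p.append q).IsPath := by
  rw [Walk.isPath_def, Walk.support_append, List.nodup_append]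
  exact ⟨hp.support_nodup, hq.support_nodup.tail, fun x hx y hy hxy => h x hx (hxy ▸ hy)⟩

namespace IsTree

variable (hG : G.IsTree)
include hG

theorem length_eq_dist {u v : V} {p : G.Walk u v} (hp : p.IsPath) : p.length = G.dist u v := by
  obtain ⟨q, hq, hlen⟩ := hG.connected.exists_path_of_dist u v
  rw [(hG.existsUnique_path u v).unique hp hq, hlen]

theorem dist_add_dist_eq_of_mem_support {u v w : V} {p : G.Walk u v} (hp : p.IsPath)
    (hw : w ∈ p.support) : G.dist u w + G.dist w v = G.dist u v := by
  obtain ⟨q, r, hq, hr, rfl⟩ := hp.mem_support_iff_exists_append.mp hw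
  rw [← hG.length_eq_dist hq, ← hG.length_eq_dist hr, ← hG.length_eq_dist hp,
    Walk.length_append]

theorem dist_add_dist_eq_of_forall_dist_le {a b v m : V} {p : G.Walk a b} (hp : p.IsPath)
    (hm : m ∈ p.support) (hmin : ∀ x ∈ p.support, G.dist v m ≤ G.dist v x) :
    G.dist v m + G.dist m b = G.dist v b := by
  obtain ⟨q, r, -, hr, rfl⟩ := hp.mem_support_iff_exists_append.mp hm
  obtain ⟨s, hs, hslen⟩ := hG.connected.exists_path_of_dist v m
  have hsr : (s.append r).IsPath := by
    -- a vertex of `s` on `p` is no closer to `v` than `m`, so it is `m` itself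
    refine hs.append hr fun x hxs hxr => ?_
    have hxm : x ≠ m := by
      rintro rfl
      have := hr.support_nodup
      rw [← Walk.cons_tail_support] at this
      exact (List.nodup_cons.mp this).1 hxr
    have hxp : x ∈ (q.append r).support := by
      rw [Walk.support_append]; exact List.mem_append_right _ hxr
    have hsplit := hG.dist_add_dist_eq_of_mem_support hs hxs
    have hvx := hmin x hxp
    exact hxm (hG.connected.dist_eq_zero_iff.mp (by omega))
  rw [← hslen, ← hG.length_eq_dist hr, ← Walk.length_append, hG.length_eq_dist hsr]

theorem exists_mem_support_dist_add_dist_eq {a b : V} {p : G.Walk a b} (hp : p.IsPath) (v : V) :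
    ∃ m ∈ p.support, G.dist v m + G.dist m a = G.dist v a ∧
      G.dist v m + G.dist m b = G.dist v b := by
  obtain ⟨m, hm, hmin⟩ := Set.exists_min_image {x | x ∈ p.support} (G.dist v)
    p.support.finite_toSet ⟨a, p.start_mem_support⟩
  have hrev : ∀ x, x ∈ p.reverse.support ↔ x ∈ p.support := by simp [Walk.support_reverse]
  refine ⟨m, hm, ?_, hG.dist_add_dist_eq_of_forall_dist_le hp hm hmin⟩
  exact hG.dist_add_dist_eq_of_forall_dist_le hp.reverse ((hrev m).mpr hm)
    fun x hx => hmin x ((hrev x).mp hx)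

theorem dist_add_dist_eq_or_of_mem_support {a b m m' : V} {p : G.Walk a b} (hp : p.IsPath)
    (hm : m ∈ p.support) (hm' : m' ∈ p.support) :
    G.dist a m' + G.dist m' m = G.dist a m ∨ G.dist a m + G.dist m m' = G.dist a m' := by
  have hsplit := hG.dist_add_dist_eq_of_mem_support hp hm
  have hsplit' := hG.dist_add_dist_eq_of_mem_support hp hm'
  obtain ⟨q, r, hq, hr, rfl⟩ := hp.mem_support_iff_exists_append.mp hm
  rcases (Walk.mem_support_append_iff q r).mp hm' with h | h
  · exact Or.inl (hG.dist_add_dist_eq_of_mem_support hq h)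
  · have := hG.dist_add_dist_eq_of_mem_support hr h
    omega

theorem dist_add_dist_le_max (x y z w : V) :
    G.dist x y + G.dist z w ≤ max (G.dist x z + G.dist y w) (G.dist x w + G.dist y z) := by
  obtain ⟨p, hp, -⟩ := hG.connected.exists_path_of_dist z w
  obtain ⟨m, hm, hxz, hxw⟩ := hG.exists_mem_support_dist_add_dist_eq hp x
  obtain ⟨m', hm', hyz, hyw⟩ := hG.exists_mem_support_dist_add_dist_eq hp y
  have hzw := hG.dist_add_dist_eq_of_mem_support hp hm
  have hzw' := hG.dist_add_dist_eq_of_mem_support hp hm'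
  have hxy : G.dist x y ≤ G.dist x m + G.dist m y := hG.connected.dist_triangle
  have hmy : G.dist m y ≤ G.dist m m' + G.dist m' y := hG.connected.dist_triangle
  have := hG.dist_add_dist_eq_or_of_mem_support hp hm hm'
  have := G.dist_comm (u := m) (v := z)
  have := G.dist_comm (u := m') (v := z)
  have := G.dist_comm (u := m') (v := m)
  have := G.dist_comm (u := m') (v := y)
  omega

theorem dist_add_le_max_of_diametral {c : V → EReal} (hc : ∀ y, c y ≠ ⊤) {a b : V}
    (hab : ∀ a' b', c a' + ((G.dist a' b' : ℝ) : EReal) + c b' ≤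
      c a + ((G.dist a b : ℝ) : EReal) + c b) (u y : V) :
    ((G.dist u y : ℝ) : EReal) + c y ≤
      max (((G.dist u a : ℝ) : EReal) + c a) (((G.dist u b : ℝ) : EReal) + c b) := by
  rcases eq_or_ne (c y) ⊥ with hy | hy
  · simp [hy]
  obtain ⟨ry, hry⟩ : ∃ r : ℝ, (r : EReal) = c y := ⟨_, EReal.coe_toReal (hc y) hy⟩
  have hyy := hab y y
  rw [← hry] at hyy
  obtain ⟨ra, hra⟩ : ∃ r : ℝ, (r : EReal) = c a := by
    refine ⟨_, EReal.coe_toReal (hc a) fun ha => ?_⟩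
    simp [ha] at hyy
  obtain ⟨rb, hrb⟩ : ∃ r : ℝ, (r : EReal) = c b := by
    refine ⟨_, EReal.coe_toReal (hc b) fun hb => ?_⟩
    simp [hb] at hyy
  have hya := hab y a
  have hyb := hab y b
  rw [← hry, ← hra, ← hrb] at hya hyb ⊢
  norm_cast at hya hyb ⊢
  rcases le_max_iff.mp (hG.dist_add_dist_le_max u y a b) with h | h
  · refine le_max_of_le_left (EReal.coe_le_coe_iff.mpr ?_)
    have : (G.dist u y + G.dist a b : ℝ) ≤ G.dist u a + G.dist y b := by exact_mod_cast h
    linarith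
  · refine le_max_of_le_right (EReal.coe_le_coe_iff.mpr ?_)
    have : (G.dist u y + G.dist a b : ℝ) ≤ G.dist u b + G.dist y a := by exact_mod_cast h
    linarith

end IsTree

end SimpleGraph

theorem stmt_8_general {V : Type*} (T : SimpleGraph V) (hT : T.IsTree)
    (c : V → EReal) (hcTop : ∀ y : V, c y ≠ ⊤)
    (a b : V)
    (hab : ∀ a' b' : V, c a' + ((T.dist a' b' : ℝ) : EReal) + c b' ≤
      c a + ((T.dist a b : ℝ) : EReal) + c b) :
    ∀ u : V, (⨆ y : V, (((T.dist u y : ℝ) : EReal) + c y)) =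
      max (((T.dist u a : ℝ) : EReal) + c a) (((T.dist u b : ℝ) : EReal) + c b) :=
  fun u => le_antisymm (iSup_le (hT.dist_add_le_max_of_diametral hcTop hab u))
    (max_le (le_iSup_of_le a le_rfl) (le_iSup_of_le b le_rfl))

/-- If `a, b` are the endpoints of a diametral path of `T` w.r.t. `c`,
then for every vertex `u`, the eccentricity `max_y (d_T(u,y) + c(y))` equals
`max{d_T(u,a) + c(a), d_T(u,b) + c(b)}`. -/
theorem stmt_8 {V : Type*} [Fintype V] [Nonempty V] (T : SimpleGraph V) (hT : T.IsTree)
    (c : V → EReal) (hcTop : ∀ y : V, c y ≠ ⊤)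
    (a b : V)
    (hab : ∀ a' b' : V, c a' + ((T.dist a' b' : ℝ) : EReal) + c b' ≤
      c a + ((T.dist a b : ℝ) : EReal) + c b) :
    ∀ u : V, (⨆ y : V, (((T.dist u y : ℝ) : EReal) + c y)) =
      max (((T.dist u a : ℝ) : EReal) + c a) (((T.dist u b : ℝ) : EReal) + c b) :=
  stmt_8_general T hT c hcTop a b hab
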